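/- arXiv:1109.0903 — 6 statements merged into one kernel-verified Lean document; each statement's English description precedes it below -/
import Mathlib

section
/- No two of the following eight elements of Φ² are related by any finite composition of the maps W₀, W₁, W₂ (equivalently, they are pairwise inequivalent under the smallest equivalence relation on Φ² relating every pair to its image under each of these maps wherever defined): (0,∅), (1,∅), (2,∅), (3,∅), (4,∅), (∞,∅), (−2,−2), (5/2,7/2). -/
/-! Slopes: `QInf = ℚ ∪ {∞}` with `none = ∞`; `Phi = ℚ ∪ {∞, ∅}` with outer `none = ∅`. -/

abbrev QInf := Option ℚ
abbrev Phi := Option QInf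

/-- The Möbius map `x ↦ (a·x + b)/(c·x + d)` extended projectively to `ℚ ∪ {∞}`. -/
def mob (a b c d : ℚ) : QInf → QInf
  | none => if c = 0 then none else some (a / c)
  | some x => if c * x + d = 0 then none else some ((a * x + b) / (c * x + d))

/-- The extension of a Möbius map to `Φ`, fixing the empty slope `∅`. -/
def mobP (a b c d : ℚ) : Phi → Phi := Option.map (mob a b c d)

/-- The nonempty finite slope `x ∈ ℚ`. -/
def sl (x : ℚ) : Phi := some (some x)
/-- The slope `∞`. -/
def inf : Phi := some none
/-- The empty slope `∅`. -/
def emp : Phi := none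

abbrev Phi2 := Fin 2 → Phi

/-- W₀(α₁,α₂) = (α₂,α₁). -/
def w0Map (x : Phi2) : Phi2 := ![x 1, x 0]

/-- The graph of the partial map W₁(−1,α₂) = (−1,−α₂), defined exactly on pairs with
first entry −1. -/
def w1Rel (x y : Phi2) : Prop :=
  x 0 = sl (-1) ∧ y = ![sl (-1), mobP (-1) 0 0 1 (x 1)]

/-- The graph of the partial map W₂(5,α₂) = (5, α₂/(α₂−1)), defined exactly on pairs with
first entry 5. -/
def w2Rel (x y : Phi2) : Prop :=
  x 0 = sl 5 ∧ y = ![sl 5, mobP 1 0 1 (-1) (x 1)]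

/-- One application of W₀, W₁ or W₂ (wherever defined). -/
def stepW (x y : Phi2) : Prop :=
  y = w0Map x ∨ w1Rel x y ∨ w2Rel x y


lemma w0_pair (p q : Phi) : w0Map ![p, q] = ![q, p] := by
  funext i; fin_cases i <;> simp [w0Map]

lemma w0_invol (x : Phi2) : w0Map (w0Map x) = x := by
  funext i; fin_cases i <;> simp [w0Map]

lemma orbit2_step (a b : Phi) (ha0 : a ≠ sl (-1)) (ha5 : a ≠ sl 5)
    (hb0 : b ≠ sl (-1)) (hb5 : b ≠ sl 5) {x y : Phi2} (h : stepW x y) :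
    ((x = ![a, b] ∨ x = ![b, a]) ↔ (y = ![a, b] ∨ y = ![b, a])) := by
  rcases h with h | ⟨hx, hy⟩ | ⟨hx, hy⟩
  · subst h
    constructor
    · rintro (rfl | rfl)
      · right; exact w0_pair a b
      · left; exact w0_pair b a
    · rintro (h | h)
      · right
        have := congrArg w0Map h
        rw [w0_invol, w0_pair] at this
        exact this
      · left
        have := congrArg w0Map h
        rw [w0_invol, w0_pair] at this
        exact this
  · subst hy
    constructor
    · rintro (rfl | rfl)
      · exact absurd hx (by simpa using ha0)
      · exact absurd hx (by simpa using hb0)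
    · rintro (h | h)
      · have h0 := congrFun h 0; simp at h0; exact (ha0 h0.symm).elim
      · have h0 := congrFun h 0; simp at h0; exact (hb0 h0.symm).elim
  · subst hy
    constructor
    · rintro (rfl | rfl)
      · exact absurd hx (by simpa using ha5)
      · exact absurd hx (by simpa using hb5)
    · rintro (h | h)
      · have h0 := congrFun h 0; simp at h0; exact (ha5 h0.symm).elim
      · have h0 := congrFun h 0; simp at h0; exact (hb5 h0.symm).elim

lemma orbit2_eqv (a b : Phi) (ha0 : a ≠ sl (-1)) (ha5 : a ≠ sl 5)
    (hb0 : b ≠ sl (-1)) (hb5 : b ≠ sl 5) {x y : Phi2}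
    (h : Relation.EqvGen stepW x y) :
    ((x = ![a, b] ∨ x = ![b, a]) ↔ (y = ![a, b] ∨ y = ![b, a])) := by
  induction h with
  | rel _ _ h => exact orbit2_step a b ha0 ha5 hb0 hb5 h
  | refl _ => exact Iff.rfl
  | symm _ _ _ ih => exact ih.symm
  | trans _ _ _ _ _ ih1 ih2 => exact ih1.trans ih2

lemma key (a b c d : Phi) (ha0 : a ≠ sl (-1)) (ha5 : a ≠ sl 5)
    (hb0 : b ≠ sl (-1)) (hb5 : b ≠ sl 5)
    (h1 : ¬ (![c, d] = ![a, b] ∨ ![c, d] = ![b, a])) :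
    ¬ Relation.EqvGen stepW ![a, b] ![c, d] := fun h =>
  h1 ((orbit2_eqv a b ha0 ha5 hb0 hb5 h).mp (Or.inl rfl))

/-- No two of the eight listed elements of Φ² are related by any finite composition of the
maps W₀, W₁, W₂, i.e. they are pairwise inequivalent under the smallest equivalence relation
relating every pair to its image under each of these maps wherever defined. -/
theorem whitehead_eight_exceptional_fillings_pairwise_inequivalent :
    List.Pairwise (fun x y => ¬ Relation.EqvGen stepW x y)
      [![sl 0, emp], ![sl 1, emp], ![sl 2, emp], ![sl 3, emp],
       ![sl 4, emp], ![inf, emp], ![sl (-2), sl (-2)], ![sl (5/2), sl (7/2)]] := by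
  simp only [List.pairwise_cons, List.mem_cons, List.not_mem_nil, List.mem_singleton,
    forall_eq_or_imp, forall_eq]
  repeat' apply And.intro
  all_goals first
    | trivial
    | exact List.Pairwise.nil
    | (intro _ h; cases h)
    | (apply key <;> first
        | (rintro (h | h) <;> first
            | exact absurd (congrFun h 0) (by simp [sl, emp, inf]; try norm_num)
            | exact absurd (congrFun h 1) (by simp [sl, emp, inf]; try norm_num))
        | (intro h
           first
             | exact absurd (congrFun h 0) (by simp [sl, emp, inf]; try norm_num)
             | exact absurd (congrFun h 1) (by simp [sl, emp, inf]; try norm_num)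
             | (simp [sl, emp, inf] at h; try norm_num at h))
        | (simp [sl, emp, inf]; done)
        | (norm_num [sl, emp, inf]; done))
end

section
/- No two of the following six elements of Φ⁴ are related by any finite composition of the maps a, b, c, d, e, f (equivalently, they are pairwise inequivalent under the smallest equivalence relation on Φ⁴ relating every 4-tuple to its image under each of these maps wherever defined): (0,∅,∅,∅), (∞,∅,∅,∅), (−1,−2,−1,∅), (−2,−2,−2,−2), (−1,−3,−2,−3), (−1,−2,−3,−4). -/
abbrev Phi4 := Fin 4 → Phi

/-- a(α₁,α₂,α₃,α₄) = (α₄,α₁,α₂,α₃). -/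
def mapA (x : Phi4) : Phi4 := ![x 3, x 0, x 1, x 2]

/-- b(α₁,α₂,α₃,α₄) = (α₄,α₃,α₂,α₁). -/
def mapB (x : Phi4) : Phi4 := ![x 3, x 2, x 1, x 0]

/-- c(α₁,α₂,α₃,α₄) = ((α₁−2)/(α₁−1), (α₂−2)/(α₂−1), (α₃−2)/(α₃−1), (α₄−2)/(α₄−1)). -/
def mapC (x : Phi4) : Phi4 :=
  ![mobP 1 (-2) 1 (-1) (x 0), mobP 1 (-2) 1 (-1) (x 1),
    mobP 1 (-2) 1 (-1) (x 2), mobP 1 (-2) 1 (-1) (x 3)]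

/-- d(α₁,α₂,α₃,α₄) = (2−α₁, α₂/(α₂−1), 2−α₃, α₄/(α₄−1)). -/
def mapD (x : Phi4) : Phi4 :=
  ![mobP (-1) 2 0 1 (x 0), mobP 1 0 1 (-1) (x 1),
    mobP (-1) 2 0 1 (x 2), mobP 1 0 1 (-1) (x 3)]

/-- The graph of the partial map e(−1,α₂,α₃,α₄) = (−1, α₃−1, α₂+1, α₄), defined exactly
on 4-tuples with first entry −1. -/
def eRel (x y : Phi4) : Prop :=
  x 0 = sl (-1) ∧ y = ![sl (-1), mobP 1 (-1) 0 1 (x 2), mobP 1 1 0 1 (x 1), x 3]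

/-- The graph of the partial map f(−1,−2,−2,α₄) = (−1,−2,−2,−α₄−4), defined exactly on
4-tuples of the form (−1,−2,−2,α₄). -/
def fRel (x y : Phi4) : Prop :=
  x 0 = sl (-1) ∧ x 1 = sl (-2) ∧ x 2 = sl (-2) ∧
  y = ![sl (-1), sl (-2), sl (-2), mobP (-1) (-4) 0 1 (x 3)]

/-- One application of a, b, c, d, e or f (wherever defined). -/
def stepM4 (x y : Phi4) : Prop :=
  y = mapA x ∨ y = mapB x ∨ y = mapC x ∨ y = mapD x ∨ eRel x y ∨ fRel x y


/-!
Reduce slopes mod 2: a slope `m/n` in lowest terms goes to the point `[m : n]` of `ℙ¹(𝔽₂)`, and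
`∅` stays `∅`. Every Möbius map occurring in a–f has integer coefficients and determinant `±1`,
so reduction commutes with it, and each of a–f becomes a map of the 256-element set
`(ℙ¹(𝔽₂) ∪ {∅})⁴`. Equivalent 4-tuples therefore have reductions in the same orbit of these
finitely many maps, and computing the orbits of the six reductions shows that they are distinct.
-/

namespace P1

section Field

variable {K : Type*} [Field K] [DecidableEq K]

/-- The point `[u : v]` of `ℙ¹(K) = K ∪ {∞}`, with `none = ∞`; junk value `∞` at `[0 : 0]`. -/
def mk (u v : K) : Option K := if v = 0 then none else some (u / v)

theorem mk_mul_left {k : K} (hk : k ≠ 0) (u v : K) : mk (k * u) (k * v) = mk u v := by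
  simp only [mk, mul_eq_zero, hk, false_or, mul_div_mul_left _ _ hk]

theorem mk_eq_mk_of_mul_eq_mul {u v u' v' : K} (huv : u ≠ 0 ∨ v ≠ 0) (huv' : u' ≠ 0 ∨ v' ≠ 0)
    (h : u * v' = u' * v) : mk u v = mk u' v' := by
  unfold mk
  by_cases hv : v = 0 <;> by_cases hv' : v' = 0
  · simp [hv, hv']
  · simp_all
  · simp_all
  · simp only [hv, hv', if_false, Option.some.injEq]
    rw [div_eq_div_iff hv hv', h]

def moebius (a b c d : K) : Option K → Option K
  | none => mk a c
  | some x => mk (a * x + b) (c * x + d)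

theorem moebius_mk (a b c d : K) {m n : K} (hmn : m ≠ 0 ∨ n ≠ 0) :
    moebius a b c d (mk m n) = mk (a * m + b * n) (c * m + d * n) := by
  by_cases hn : n = 0
  · have hm : m ≠ 0 := by simpa [hn] using hmn
    simp only [mk, hn, if_true, moebius, mul_zero, add_zero]
    rw [mul_comm a, mul_comm c, ← mk, ← mk, mk_mul_left hm]
  · simp only [mk, hn, if_false, moebius]
    rw [← mk, ← mk, ← mk_mul_left hn]
    congr 1 <;> field_simp

theorem ne_zero_or_ne_zero_of_det_ne_zero {a b c d m n : K} (hdet : a * d - b * c ≠ 0)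
    (hmn : m ≠ 0 ∨ n ≠ 0) : a * m + b * n ≠ 0 ∨ c * m + d * n ≠ 0 := by
  by_contra! h
  obtain ⟨h₁, h₂⟩ := h
  have hm : (a * d - b * c) * m = 0 := by linear_combination d * h₁ - b * h₂
  have hn : (a * d - b * c) * n = 0 := by linear_combination a * h₂ - c * h₁
  simp only [mul_eq_zero, hdet, false_or] at hm hn
  tauto

end Field

theorem mob_eq_moebius (a b c d : ℚ) : mob a b c d = moebius a b c d := by
  funext x
  cases x <;> rfl

def coords : Option ℚ → ℤ × ℤ
  | none => (1, 0)
  | some q => (q.num, q.den)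

theorem isCoprime_coords (x : Option ℚ) : IsCoprime (coords x).1 (coords x).2 := by
  cases x with
  | none => exact isCoprime_one_left
  | some q => exact Int.isCoprime_iff_gcd_eq_one.mpr q.reduced

theorem mk_coords (x : Option ℚ) : mk ((coords x).1 : ℚ) (coords x).2 = x := by
  cases x with
  | none => simp [mk, coords]
  | some q => simp [mk, coords, q.den_nz, Rat.num_div_den]

variable (p : ℕ) [Fact p.Prime]

def reduce (x : Option ℚ) : Option (ZMod p) := mk ((coords x).1 : ZMod p) (coords x).2

variable {p}

theorem reduce_mk {u v : ℤ} (huv : (u : ZMod p) ≠ 0 ∨ (v : ZMod p) ≠ 0) :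
    reduce p (mk (u : ℚ) v) = mk (u : ZMod p) v := by
  by_cases hv : v = 0
  · subst hv
    simp [mk, reduce, coords]
  set q : ℚ := u / v
  have hq : mk (u : ℚ) v = some q := by simp [mk, hv, q]
  have hcross : q.num * v = u * q.den := by
    have : (q.num : ℚ) * v = u * q.den := by
      rw [← Rat.mul_den_eq_num]; simp only [q]; field_simp
    exact_mod_cast this
  rw [hq]
  apply mk_eq_mk_of_mul_eq_mul _ huv
  · exact_mod_cast congrArg (Int.cast : ℤ → ZMod p) hcross
  · exact ((isCoprime_coords (some q)).map (Int.castRingHom (ZMod p))).ne_zero_or_ne_zero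

theorem reduce_moebius {a b c d : ℤ} (hdet : ((a * d - b * c : ℤ) : ZMod p) ≠ 0)
    (x : Option ℚ) :
    reduce p (moebius (a : ℚ) b c d x) = moebius (a : ZMod p) b c d (reduce p x) := by
  set m := (coords x).1
  set n := (coords x).2
  have hmn : (m : ZMod p) ≠ 0 ∨ (n : ZMod p) ≠ 0 := by
    simpa using ((isCoprime_coords x).map (Int.castRingHom (ZMod p))).ne_zero_or_ne_zero
  have hmnQ : (m : ℚ) ≠ 0 ∨ (n : ℚ) ≠ 0 :=
    hmn.imp (by rintro h h0; simp_all) (by rintro h h0; simp_all)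
  calc reduce p (moebius (a : ℚ) b c d x)
      = reduce p (mk ((a * m + b * n : ℤ) : ℚ) ((c * m + d * n : ℤ) : ℚ)) := by
        rw [← mk_coords x, moebius_mk _ _ _ _ hmnQ]; push_cast; rfl
    _ = mk ((a * m + b * n : ℤ) : ZMod p) ((c * m + d * n : ℤ) : ZMod p) :=
        reduce_mk <| by
          push_cast; exact ne_zero_or_ne_zero_of_det_ne_zero (by exact_mod_cast hdet) hmn
    _ = moebius (a : ZMod p) b c d (reduce p x) := by
        rw [reduce, moebius_mk _ _ _ _ hmn]; push_cast; rfl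

end P1

theorem Relation.EqvGen.map {α β : Type*} {r : α → α → Prop} {s : β → β → Prop} {f : α → β}
    (hf : ∀ x y, r x y → s (f x) (f y)) {x y : α} (h : Relation.EqvGen r x y) :
    Relation.EqvGen s (f x) (f y) := by
  induction h with
  | rel x y hxy => exact .rel _ _ (hf x y hxy)
  | refl => exact .refl _
  | symm _ _ _ ih => exact .symm _ _ ih
  | trans _ _ _ _ _ ih₁ ih₂ => exact .trans _ _ _ ih₁ ih₂

section Orbit

variable {α : Type*} (moves : List (α → α))

def MoveRel (x y : α) : Prop := ∃ g ∈ moves, y = g x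

variable [DecidableEq α]

def expand (S : Finset α) : Finset α := S ∪ S.biUnion fun x => (moves.map (· x)).toFinset

def orbitUpTo (n : ℕ) (x : α) : Finset α := (expand moves)^[n] {x}

variable {moves}

theorem mem_orbitUpTo_self (n : ℕ) (x : α) : x ∈ orbitUpTo moves n x := by
  induction n with
  | zero => exact Finset.mem_singleton_self x
  | succ n ih =>
    rw [orbitUpTo, Function.iterate_succ_apply']
    exact Finset.mem_union_left _ ih

theorem mem_expand_of_mem {S : Finset α} {x : α} (hx : x ∈ S) {g : α → α} (hg : g ∈ moves) :
    g x ∈ expand moves S :=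
  Finset.mem_union_right _ (Finset.mem_biUnion.mpr ⟨x, hx, by simpa using ⟨g, hg, rfl⟩⟩)

theorem mem_iff_mem_of_eqvGen (hinv : ∀ x, ∀ g ∈ moves, ∃ g' ∈ moves, g' (g x) = x)
    {S : Finset α} (hS : expand moves S = S) {x y : α}
    (h : Relation.EqvGen (MoveRel moves) x y) : x ∈ S ↔ y ∈ S := by
  induction h with
  | rel x y hxy =>
    obtain ⟨g, hg, rfl⟩ := hxy
    obtain ⟨g', hg', hg'g⟩ := hinv x g hg
    refine ⟨fun hx => hS ▸ mem_expand_of_mem hx hg, fun hy => ?_⟩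
    rw [← hg'g, ← hS]
    exact mem_expand_of_mem hy hg'
  | refl => rfl
  | symm _ _ _ ih => exact ih.symm
  | trans _ _ _ _ _ ih₁ ih₂ => exact ih₁.trans ih₂

theorem not_eqvGen_of_not_mem_orbitUpTo (hinv : ∀ x, ∀ g ∈ moves, ∃ g' ∈ moves, g' (g x) = x)
    {n : ℕ} {x y : α}
    (hfix : expand moves (orbitUpTo moves n x) = orbitUpTo moves n x)
    (hy : y ∉ orbitUpTo moves n x) : ¬ Relation.EqvGen (MoveRel moves) x y :=
  fun h => hy ((mem_iff_mem_of_eqvGen hinv hfix h).mp (mem_orbitUpTo_self n x))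

end Orbit

open P1

theorem map_reduce_mobP {p : ℕ} [Fact p.Prime] {a b c d : ℤ}
    (hdet : ((a * d - b * c : ℤ) : ZMod p) ≠ 0) (v : Phi) :
    Option.map (reduce p) (mobP a b c d v) =
      Option.map (moebius (a : ZMod p) b c d) (Option.map (reduce p) v) := by
  cases v <;> simp [mobP, mob_eq_moebius, reduce_moebius hdet]

abbrev Phi4₂ := Fin 4 → Option (Option (ZMod 2))

def reduce4 (x : Phi4) : Phi4₂ := fun i => Option.map (reduce 2) (x i)

def mapA₂ (s : Phi4₂) : Phi4₂ := ![s 3, s 0, s 1, s 2]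

def mapAInv₂ (s : Phi4₂) : Phi4₂ := ![s 1, s 2, s 3, s 0]

def mapB₂ (s : Phi4₂) : Phi4₂ := ![s 3, s 2, s 1, s 0]

def mapC₂ (s : Phi4₂) : Phi4₂ := fun i => Option.map (moebius 1 (-2) 1 (-1)) (s i)

def mapD₂ (s : Phi4₂) : Phi4₂ :=
  ![Option.map (moebius (-1) 2 0 1) (s 0), Option.map (moebius 1 0 1 (-1)) (s 1),
    Option.map (moebius (-1) 2 0 1) (s 2), Option.map (moebius 1 0 1 (-1)) (s 3)]

def mapE₂ (s : Phi4₂) : Phi4₂ :=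
  if s 0 = some (some (-1)) then
    ![s 0, Option.map (moebius 1 (-1) 0 1) (s 2), Option.map (moebius 1 1 0 1) (s 1), s 3]
  else s

def mapF₂ (s : Phi4₂) : Phi4₂ :=
  if s 0 = some (some (-1)) ∧ s 1 = some (some (-2)) ∧ s 2 = some (some (-2)) then
    ![s 0, s 1, s 2, Option.map (moebius (-1) (-4) 0 1) (s 3)]
  else s

/-- `mapAInv₂` adds no new relation; it is there so that `moves₂` is closed under inverses. -/
def moves₂ : List (Phi4₂ → Phi4₂) := [mapA₂, mapAInv₂, mapB₂, mapC₂, mapD₂, mapE₂, mapF₂]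

theorem moves₂_exists_inv : ∀ s, ∀ g ∈ moves₂, ∃ g' ∈ moves₂, g' (g s) = s := by
  decide +kernel

theorem moveRel_reduce4_of_stepM4 {x y : Phi4} (h : stepM4 x y) :
    MoveRel moves₂ (reduce4 x) (reduce4 y) := by
  rcases h with rfl | rfl | rfl | rfl | ⟨h0, rfl⟩ | ⟨h0, h1, h2, rfl⟩
  · refine ⟨mapA₂, by simp [moves₂], funext fun i => ?_⟩
    fin_cases i <;> rfl
  · refine ⟨mapB₂, by simp [moves₂], funext fun i => ?_⟩
    fin_cases i <;> rfl
  · refine ⟨mapC₂, by simp [moves₂], funext fun i => ?_⟩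
    have hc := map_reduce_mobP (p := 2) (a := 1) (b := -2) (c := 1) (d := -1) (by decide +kernel)
    push_cast at hc
    fin_cases i <;> simp [reduce4, mapC, mapC₂, hc]
  · refine ⟨mapD₂, by simp [moves₂], funext fun i => ?_⟩
    have hd₀ := map_reduce_mobP (p := 2) (a := -1) (b := 2) (c := 0) (d := 1) (by decide +kernel)
    have hd₁ := map_reduce_mobP (p := 2) (a := 1) (b := 0) (c := 1) (d := -1) (by decide +kernel)
    push_cast at hd₀ hd₁
    fin_cases i <;> simp [reduce4, mapD, mapD₂, hd₀, hd₁]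
  · have hx0 : reduce4 x 0 = some (some (-1)) := by rw [reduce4, h0]; decide +kernel
    refine ⟨mapE₂, by simp [moves₂], funext fun i => ?_⟩
    have he₁ := map_reduce_mobP (p := 2) (a := 1) (b := -1) (c := 0) (d := 1) (by decide +kernel)
    have he₂ := map_reduce_mobP (p := 2) (a := 1) (b := 1) (c := 0) (d := 1) (by decide +kernel)
    push_cast at he₁ he₂
    rw [mapE₂, if_pos hx0]
    fin_cases i <;> simp [reduce4, h0, he₁, he₂]
  · have hx0 : reduce4 x 0 = some (some (-1)) := by rw [reduce4, h0]; decide +kernel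
    have hx1 : reduce4 x 1 = some (some (-2)) := by rw [reduce4, h1]; decide +kernel
    have hx2 : reduce4 x 2 = some (some (-2)) := by rw [reduce4, h2]; decide +kernel
    refine ⟨mapF₂, by simp [moves₂], funext fun i => ?_⟩
    have hf := map_reduce_mobP (p := 2) (a := -1) (b := -4) (c := 0) (d := 1) (by decide +kernel)
    push_cast at hf
    rw [mapF₂, if_pos ⟨hx0, hx1, hx2⟩]
    fin_cases i <;> simp [reduce4, h0, h1, h2, hf]

theorem pairwise_not_eqvGen_stepM4_of_orbits {n : ℕ} (L : List Phi4)
    (hfix : ∀ x ∈ L,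
      expand moves₂ (orbitUpTo moves₂ n (reduce4 x)) = orbitUpTo moves₂ n (reduce4 x))
    (hsep : L.Pairwise fun x y => reduce4 y ∉ orbitUpTo moves₂ n (reduce4 x)) :
    L.Pairwise fun x y => ¬ Relation.EqvGen stepM4 x y := by
  refine hsep.imp_of_mem fun {x y} hx _ hy h => ?_
  exact not_eqvGen_of_not_mem_orbitUpTo moves₂_exists_inv (hfix x hx) hy
    (h.map fun _ _ hxy => moveRel_reduce4_of_stepM4 hxy)

/-- No two of the six listed elements of Φ⁴ are related by any finite composition of the
maps a, b, c, d, e, f, i.e. they are pairwise inequivalent under the smallest equivalence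
relation relating every 4-tuple to its image under each of these maps wherever defined. -/
theorem chainlink4_six_exceptional_fillings_pairwise_inequivalent :
    List.Pairwise (fun x y => ¬ Relation.EqvGen stepM4 x y)
      [![sl 0, emp, emp, emp], ![inf, emp, emp, emp],
       ![sl (-1), sl (-2), sl (-1), emp], ![sl (-2), sl (-2), sl (-2), sl (-2)],
       ![sl (-1), sl (-3), sl (-2), sl (-3)], ![sl (-1), sl (-2), sl (-3), sl (-4)]] :=
  pairwise_not_eqvGen_stepM4_of_orbits (n := 6) _ (by decide +kernel) (by decide +kernel)
end

section
/- The maps σ, τ, ν are bijections of Φ⁵, and there is an injective group homomorphism ρ from the symmetric group S₅ into the group of bijections of Φ⁵ such that ρ((1 2 3 4 5)) = σ, ρ((1 5)(2 4)) = τ, and ρ((1 2)) = ν. In particular the subgroup of permutations of Φ⁵ generated by σ, τ, ν is isomorphic to S₅. -/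
abbrev Phi5 := Fin 5 → Phi

/-- σ(α₁,α₂,α₃,α₄,α₅) = (α₅,α₁,α₂,α₃,α₄). -/
def sigmaMap (x : Phi5) : Phi5 := ![x 4, x 0, x 1, x 2, x 3]

/-- τ(α₁,α₂,α₃,α₄,α₅) = (α₅,α₄,α₃,α₂,α₁). -/
def tauMap (x : Phi5) : Phi5 := ![x 4, x 3, x 2, x 1, x 0]

/-- ν(α₁,α₂,α₃,α₄,α₅) = (1/α₂, 1/α₁, 1−α₃, α₄/(α₄−1), 1−α₅). -/
def nuMap (x : Phi5) : Phi5 :=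
  ![mobP 0 1 1 0 (x 1), mobP 0 1 1 0 (x 0), mobP (-1) 1 0 1 (x 2),
    mobP 1 0 1 (-1) (x 3), mobP (-1) 1 0 1 (x 4)]

open Equiv

section WreathCocycle

variable {G ι H X : Type*} [Group G] [MulAction G ι] [Group H] [MulAction H X]

/-- `p ↦ (c p, p)` is a homomorphism into the permutational wreath product `H ≀_ι G`. -/
def IsWreathCocycle (c : G → ι → H) : Prop :=
  ∀ p q i, c (p * q) i = c p i * c q (p⁻¹ • i)

namespace IsWreathCocycle

variable {c : G → ι → H}

lemma map_one (hc : IsWreathCocycle c) : c 1 = 1 := by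
  funext i
  simpa using hc 1 1 i

lemma comp {K : Type*} [Group K] (hc : IsWreathCocycle c) (φ : H →* K) :
    IsWreathCocycle fun p i => φ (c p i) := fun p q i => by
  simp only [hc p q i, map_mul]

end IsWreathCocycle

def wreathPermFun (c : G → ι → H) (p : G) (x : ι → X) : ι → X :=
  fun i => c p i • x (p⁻¹ • i)

variable {c : G → ι → H}

lemma wreathPermFun_mul (hc : IsWreathCocycle c) (p q : G) (x : ι → X) :
    wreathPermFun c (p * q) x = wreathPermFun c p (wreathPermFun c q x) := by
  funext i
  simp only [wreathPermFun, hc p q i, mul_smul, mul_inv_rev]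

lemma wreathPermFun_one (hc : IsWreathCocycle c) (x : ι → X) : wreathPermFun c 1 x = x := by
  funext i
  simp only [wreathPermFun, hc.map_one, Pi.one_apply, one_smul, inv_one]

def wreathPermHom (c : G → ι → H) (hc : IsWreathCocycle c) : G →* Perm (ι → X) where
  toFun p :=
    { toFun := wreathPermFun c p
      invFun := wreathPermFun c p⁻¹
      left_inv x := by rw [← wreathPermFun_mul hc, inv_mul_cancel, wreathPermFun_one hc]
      right_inv x := by rw [← wreathPermFun_mul hc, mul_inv_cancel, wreathPermFun_one hc] }
  map_one' := Equiv.ext (wreathPermFun_one hc)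
  map_mul' p q := Equiv.ext (wreathPermFun_mul hc p q)

lemma wreathPermHom_apply (hc : IsWreathCocycle c) (p : G) (x : ι → X) (i : ι) :
    wreathPermHom c hc p x i = c p i • x (p⁻¹ • i) :=
  rfl

lemma wreathPermHom_injective [FaithfulSMul G ι] [Nontrivial X] (hc : IsWreathCocycle c)
    {e : X} (he : ∀ h : H, h • e = e) : Function.Injective (wreathPermHom (X := X) c hc) := by
  classical
  rw [injective_iff_map_eq_one]
  intro p hp
  obtain ⟨a, ha⟩ := exists_ne e
  have hfix : ∀ i : ι, p⁻¹ • i = i := by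
    intro i
    have hi := congrFun (congrArg (⇑· (Function.update (fun _ => a) i e)) hp) i
    rw [wreathPermHom_apply, Perm.one_apply, Function.update_self, ← he (c p i),
      smul_left_cancel_iff] at hi
    by_contra hne
    exact ha (by simpa [Function.update_of_ne hne] using hi)
  exact inv_eq_one.mp (eq_of_smul_eq_smul fun i => by rw [hfix, one_smul])

end WreathCocycle

section Pairings

/-- The `2 + 2` partition of `Fin 5 \ {i}` in which `i + 1` is paired with `i + 4 - k`, as an
involution fixing `i`. -/
def pairing (i : Fin 5) (k : Fin 3) : Perm (Fin 5) :=
  swap (i + 1) (i + ![4, 3, 2] k) * swap (i + ![2, 2, 3] k) (i + ![3, 4, 4] k)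

def pairingLabel (t : Perm (Fin 5)) (i : Fin 5) : Fin 3 :=
  if t (i + 1) = i + 4 then 0 else if t (i + 1) = i + 3 then 1 else 2

lemma pairing_mul_self : ∀ i k, pairing i k * pairing i k = 1 := by decide

lemma pairing_apply_eq_self_iff : ∀ i k j, pairing i k j = j ↔ j = i := by decide

lemma pairingLabel_pairing : ∀ i k, pairingLabel (pairing i k) i = k := by decide

lemma pairing_injective (i : Fin 5) : Function.Injective (pairing i) :=
  Function.LeftInverse.injective (g := (pairingLabel · i)) (pairingLabel_pairing i)

set_option maxRecDepth 10000 in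
lemma eq_pairing_of_mul_self_eq_one : ∀ (t : Perm (Fin 5)) (i : Fin 5),
    t * t = 1 → (∀ j, t j = j ↔ j = i) → t = pairing i (pairingLabel t i) := by decide

def pairingLabelMap (p : Perm (Fin 5)) (i : Fin 5) (k : Fin 3) : Fin 3 :=
  pairingLabel (p * pairing (p⁻¹ i) k * p⁻¹) i

lemma conj_pairing (p : Perm (Fin 5)) (i : Fin 5) (k : Fin 3) :
    p * pairing (p⁻¹ i) k * p⁻¹ = pairing i (pairingLabelMap p i k) := by
  apply eq_pairing_of_mul_self_eq_one
  · calc p * pairing (p⁻¹ i) k * p⁻¹ * (p * pairing (p⁻¹ i) k * p⁻¹)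
        = p * (pairing (p⁻¹ i) k * pairing (p⁻¹ i) k) * p⁻¹ := by group
      _ = 1 := by rw [pairing_mul_self, mul_one, mul_inv_cancel]
  · intro j
    rw [Perm.mul_apply, Perm.mul_apply, ← Perm.eq_inv_iff_eq, pairing_apply_eq_self_iff,
      EmbeddingLike.apply_eq_iff_eq]

lemma pairingLabelMap_injective (p : Perm (Fin 5)) (i : Fin 5) :
    Function.Injective (pairingLabelMap p i) := by
  intro k k' h
  apply pairing_injective (p⁻¹ i)
  have hconj : p * pairing (p⁻¹ i) k * p⁻¹ = p * pairing (p⁻¹ i) k' * p⁻¹ := by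
    rw [conj_pairing, conj_pairing, h]
  simpa using hconj

noncomputable def pairingCocycle (p : Perm (Fin 5)) (i : Fin 5) : Perm (Fin 3) :=
  Equiv.ofBijective _ (Finite.injective_iff_bijective.mp (pairingLabelMap_injective p i))

lemma isWreathCocycle_pairingCocycle : IsWreathCocycle pairingCocycle := by
  refine fun p q i => Equiv.ext fun k => pairing_injective i ?_
  simp only [pairingCocycle, Perm.mul_apply, Equiv.ofBijective_apply, ← conj_pairing,
    Perm.smul_def, mul_inv_rev, Perm.mul_apply]
  group

end Pairings

section Anharmonic

/-- Label `k` of `Fin 3` stands for the slope `0`, `1`, `∞` respectively, and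
`anharmonicMatrix g` is an integral lift of the Möbius map permuting these slopes as `g` permutes
the labels (`x`, `x / (x - 1)`, `1 - x`, `1 / (1 - x)`, `1 / x`, `(x - 1) / x`), with signs
chosen to make it multiplicative. -/
def anharmonicMatrix (g : Perm (Fin 3)) : Matrix (Fin 2) (Fin 2) ℤ :=
  if g 0 = 0 then (if g 1 = 1 then 1 else !![1, 0; 1, -1])
  else if g 0 = 1 then (if g 1 = 0 then !![-1, 1; 0, 1] else !![0, -1; 1, -1])
  else (if g 1 = 1 then !![0, -1; -1, 0] else !![-1, 1; -1, 0])

def anharmonicMatrixHom : Perm (Fin 3) →* Matrix (Fin 2) (Fin 2) ℤ where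
  toFun := anharmonicMatrix
  map_one' := by decide
  map_mul' := by decide

def anharmonic : Perm (Fin 3) →* GL (Fin 2) ℚ :=
  (Matrix.GeneralLinearGroup.map (Int.castRingHom ℚ)).comp anharmonicMatrixHom.toHomUnits

lemma anharmonic_apply (g : Perm (Fin 3)) (i j : Fin 2) :
    anharmonic g i j = anharmonicMatrix g i j :=
  rfl

end Anharmonic

section Mobius

lemma mobP_eq_smul (g : GL (Fin 2) ℚ) (x : Option (OnePoint ℚ)) :
    mobP (g 0 0) (g 0 1) (g 1 0) (g 1 1) x = g • x := by
  rcases x with _ | _ | q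
  · rfl
  · exact congrArg some (OnePoint.smul_infty_eq_ite g).symm
  · exact congrArg some OnePoint.smul_some_eq_ite.symm

lemma mobP_neg (a b c d : ℚ) : mobP (-a) (-b) (-c) (-d) = mobP a b c d := by
  funext x
  rcases x with _ | _ | q
  · rfl
  · simp [mobP, mob, neg_div_neg_eq]
  · simp only [mobP, mob, Option.map_some]
    rw [show -c * q + -d = -(c * q + d) by ring, show -a * q + -b = -(a * q + b) by ring]
    simp only [neg_eq_zero, neg_div_neg_eq]

end Mobius

section FillingRep

noncomputable def fillingRep : Perm (Fin 5) →* Perm Phi5 :=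
  wreathPermHom (X := Option (OnePoint ℚ)) (fun p i => anharmonic (pairingCocycle p i))
    (isWreathCocycle_pairingCocycle.comp anharmonic)

lemma fillingRep_apply (p : Perm (Fin 5)) (x : Phi5) (i : Fin 5) :
    fillingRep p x i = mobP (anharmonicMatrix (pairingCocycle p i) 0 0)
      (anharmonicMatrix (pairingCocycle p i) 0 1) (anharmonicMatrix (pairingCocycle p i) 1 0)
      (anharmonicMatrix (pairingCocycle p i) 1 1) (x (p⁻¹ i)) := by
  simp only [← anharmonic_apply]
  exact (mobP_eq_smul _ (x (p⁻¹ i))).symm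

lemma fillingRep_injective : Function.Injective fillingRep :=
  wreathPermHom_injective (X := Option (OnePoint ℚ)) _ (e := none) fun _ => rfl

lemma pairingCocycle_finRotate : pairingCocycle (finRotate 5) = 1 := by
  funext i
  ext k
  revert i k
  decide

lemma pairingCocycle_tau : pairingCocycle (swap 0 4 * swap 1 3) = 1 := by
  funext i
  ext k
  revert i k
  decide

lemma pairingCocycle_swap_zero_one :
    pairingCocycle (swap 0 1) = ![swap 0 2, swap 0 2, swap 0 1, swap 1 2, swap 0 1] := by
  funext i
  ext k
  revert i k
  decide

lemma fillingRep_apply_of_pairingCocycle_eq_one {p : Perm (Fin 5)} (hp : pairingCocycle p = 1)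
    (x : Phi5) (i : Fin 5) : fillingRep p x i = x (p⁻¹ i) := by
  change anharmonic (pairingCocycle p i) • (show Option (OnePoint ℚ) from x (p⁻¹ i)) = x (p⁻¹ i)
  rw [hp, Pi.one_apply, map_one, one_smul]

lemma coe_fillingRep_finRotate : ⇑(fillingRep (finRotate 5)) = sigmaMap := by
  funext x i
  rw [fillingRep_apply_of_pairingCocycle_eq_one pairingCocycle_finRotate]
  fin_cases i <;> rfl

lemma coe_fillingRep_tau : ⇑(fillingRep (swap 0 4 * swap 1 3)) = tauMap := by
  funext x i
  rw [fillingRep_apply_of_pairingCocycle_eq_one pairingCocycle_tau]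
  fin_cases i <;> rfl

lemma coe_fillingRep_swap_zero_one : ⇑(fillingRep (swap 0 1)) = nuMap := by
  funext x i
  rw [fillingRep_apply, pairingCocycle_swap_zero_one]
  fin_cases i <;> simp [anharmonicMatrix, nuMap, swap_apply_of_ne_of_ne, ← mobP_neg 0 1 1 0]

end FillingRep

lemma closure_finRotate_tau_swap_eq_top :
    Subgroup.closure ({finRotate 5, swap 0 4 * swap 1 3, swap 0 1} : Set (Perm (Fin 5))) = ⊤ := by
  refine top_le_iff.mp ?_
  rw [← Perm.closure_cycle_adjacent_swap (isCycle_finRotate (n := 3)) support_finRotate 0]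
  exact Subgroup.closure_mono (by simp [Set.insert_subset_iff])

/-- σ, τ, ν are bijections of Φ⁵ and there is an injective group homomorphism
ρ : S₅ → Perm(Φ⁵) with ρ((1 2 3 4 5)) = σ, ρ((1 5)(2 4)) = τ, ρ((1 2)) = ν; in
particular the subgroup generated by σ, τ, ν is (the image of ρ, hence) isomorphic
to S₅. -/
theorem sigma_tau_nu_generate_S5 :
    ∃ σE τE νE : Equiv.Perm Phi5, ⇑σE = sigmaMap ∧ ⇑τE = tauMap ∧ ⇑νE = nuMap ∧
      ∃ ρ : Equiv.Perm (Fin 5) →* Equiv.Perm Phi5,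
        Function.Injective ρ ∧
        ρ (finRotate 5) = σE ∧
        ρ (Equiv.swap 0 4 * Equiv.swap 1 3) = τE ∧
        ρ (Equiv.swap 0 1) = νE ∧
        Subgroup.closure ({σE, τE, νE} : Set (Equiv.Perm Phi5)) = ρ.range := by
  refine ⟨fillingRep (finRotate 5), fillingRep (swap 0 4 * swap 1 3), fillingRep (swap 0 1),
    coe_fillingRep_finRotate, coe_fillingRep_tau, coe_fillingRep_swap_zero_one,
    fillingRep, fillingRep_injective, rfl, rfl, rfl, ?_⟩
  rw [MonoidHom.range_eq_map, ← closure_finRotate_tau_swap_eq_top, MonoidHom.map_closure,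
    Set.image_insert_eq, Set.image_insert_eq, Set.image_singleton]
end

section
/- Let z be a complex number with nonzero imaginary part, let T ⊆ ℂ be the closed triangle with vertices 0, 1, z (the convex hull of {0, 1, z}), and let c ∈ ℂ and r > 0 be the circumcenter and circumradius of this triangle, i.e. |c| = |c − 1| = |c − z| = r. Define k = r if c ∈ T, and k = max(1/2, |z|/2, |z − 1|/2) otherwise. Then for every real h ≥ 0: (for all w ∈ T, r² ≤ |w − c|² + h²) if and only if k ≤ h. -/
/-!
Let `M` be the midpoint of a side `AB`. Because `c` is equidistant from the vertices, every
vertex `P` satisfies `⟪P - M, M - c⟫ = -⟪A - P, B - P⟫ / 2`, and `‖M - c‖² = r² - ‖A - B‖² / 4`.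
If the angle at `C` is not acute, all three vertices, hence the whole triangle, lie in the
half-space `0 ≤ ⟪w - M, M - c⟫`, where `‖w - c‖ ≥ ‖M - c‖`; so `M` is the point of the triangle
nearest to `c`, and `AB` is its longest side. If no angle is obtuse, explicit barycentric
coordinates put `c` in the triangle, and then `c` itself is the nearest point.
-/

open Complex

open scoped RealInnerProductSpace

theorem forall_le_sq_norm_sub_add_sq_iff_of_mem {E : Type*} [SeminormedAddCommGroup E]
    {S : Set E} {c : E} {r h : ℝ} (hc : c ∈ S) (hr : 0 ≤ r) (hh : 0 ≤ h) :
    (∀ w ∈ S, r ^ 2 ≤ ‖w - c‖ ^ 2 + h ^ 2) ↔ r ≤ h := by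
  rw [← pow_le_pow_iff_left₀ hr hh two_ne_zero]
  refine ⟨fun H ↦ by simpa using H c hc, fun H w _ ↦ ?_⟩
  nlinarith [sq_nonneg ‖w - c‖]

section Equidistant

variable {V : Type*} [NormedAddCommGroup V] [InnerProductSpace ℝ V] {A B C P c w : V} {r h : ℝ}

theorem real_inner_sub_midpoint_midpoint_sub (hA : ‖c - A‖ = r) (hB : ‖c - B‖ = r)
    (hP : ‖c - P‖ = r) :
    ⟪P - midpoint ℝ A B, midpoint ℝ A B - c⟫ = -⟪A - P, B - P⟫ / 2 := by
  have sq_dist (X : V) : ‖c - X‖ ^ 2 = ‖X‖ ^ 2 - 2 * ⟪X, c⟫ + ‖c‖ ^ 2 := by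
    rw [norm_sub_rev, norm_sub_sq_real]
  have eA := sq_dist A
  have eB := sq_dist B
  have eP := sq_dist P
  rw [hA] at eA; rw [hB] at eB; rw [hP] at eP
  rw [midpoint_eq_smul_add]
  simp only [invOf_eq_inv, inner_sub_left, inner_sub_right, inner_smul_left, inner_smul_right,
    inner_add_left, inner_add_right, real_inner_self_eq_norm_sq, RCLike.conj_to_real]
  linear_combination eA / 4 + eB / 4 - eP / 2 + real_inner_comm A P / 2
    - real_inner_comm A B / 4

theorem sq_norm_midpoint_sub (hA : ‖c - A‖ = r) (hB : ‖c - B‖ = r) :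
    ‖midpoint ℝ A B - c‖ ^ 2 = r ^ 2 - ‖A - B‖ ^ 2 / 4 := by
  set M := midpoint ℝ A B
  have perp : ⟪A - M, M - c⟫ = 0 := by
    rw [real_inner_sub_midpoint_midpoint_sub hA hB hA, sub_self, inner_zero_left, neg_zero,
      zero_div]
  have half : ‖A - M‖ = ‖A - B‖ / 2 := by
    rw [← dist_eq_norm, ← dist_eq_norm, dist_left_midpoint, Real.norm_ofNat]; ring
  have pythagoras : ‖A - c‖ ^ 2 = ‖A - M‖ ^ 2 + 2 * ⟪A - M, M - c⟫ + ‖M - c‖ ^ 2 := by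
    rw [← norm_add_sq_real, sub_add_sub_cancel]
  rw [norm_sub_rev, hA, perp, half] at pythagoras
  linarith

theorem norm_sub_le_norm_sub_of_real_inner_nonpos (hC : ⟪A - C, B - C⟫ ≤ 0) :
    ‖A - C‖ ≤ ‖A - B‖ := by
  have cosine_law : ‖A - B‖ ^ 2 = ‖A - C‖ ^ 2 - 2 * ⟪A - C, B - C⟫ + ‖B - C‖ ^ 2 := by
    rw [← norm_sub_sq_real, sub_sub_sub_cancel_right]
  exact (pow_le_pow_iff_left₀ (norm_nonneg _) (norm_nonneg _) two_ne_zero).mp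
    (by nlinarith [sq_nonneg ‖B - C‖])

theorem convexHull_subset_halfSpace (hA : ‖c - A‖ = r) (hB : ‖c - B‖ = r) (hC : ‖c - C‖ = r)
    (hobt : ⟪A - C, B - C⟫ ≤ 0) :
    convexHull ℝ {A, B, C} ⊆ {w | 0 ≤ ⟪w - midpoint ℝ A B, midpoint ℝ A B - c⟫} := by
  refine convexHull_min ?_ ?_
  · rintro P (rfl | rfl | rfl) <;> simp only [Set.mem_ofPred_eq]
    · rw [real_inner_sub_midpoint_midpoint_sub hA hB hA]; simp
    · rw [real_inner_sub_midpoint_midpoint_sub hA hB hB]; simp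
    · rw [real_inner_sub_midpoint_midpoint_sub hA hB hC]; linarith
  · simp_rw [inner_sub_left, sub_nonneg]
    exact convex_halfSpace_ge ((innerₛₗ ℝ).flip _).isLinear _

theorem sq_norm_midpoint_sub_le (hA : ‖c - A‖ = r) (hB : ‖c - B‖ = r) (hC : ‖c - C‖ = r)
    (hobt : ⟪A - C, B - C⟫ ≤ 0) (hw : w ∈ convexHull ℝ {A, B, C}) :
    ‖midpoint ℝ A B - c‖ ^ 2 ≤ ‖w - c‖ ^ 2 := by
  have hfar : 0 ≤ ⟪w - midpoint ℝ A B, midpoint ℝ A B - c⟫ :=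
    convexHull_subset_halfSpace hA hB hC hobt hw
  rw [← sub_add_sub_cancel w (midpoint ℝ A B) c, norm_add_sq_real]
  nlinarith [sq_nonneg ‖w - midpoint ℝ A B‖]

theorem forall_le_sq_norm_sub_add_sq_iff_of_real_inner_nonpos (hA : ‖c - A‖ = r)
    (hB : ‖c - B‖ = r) (hC : ‖c - C‖ = r) (hobt : ⟪A - C, B - C⟫ ≤ 0) (hh : 0 ≤ h) :
    (∀ w ∈ convexHull ℝ {A, B, C}, r ^ 2 ≤ ‖w - c‖ ^ 2 + h ^ 2) ↔ ‖A - B‖ / 2 ≤ h := by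
  have hM : midpoint ℝ A B ∈ convexHull ℝ {A, B, C} :=
    segment_subset_convexHull (by simp) (by simp) (midpoint_mem_segment A B)
  rw [← pow_le_pow_iff_left₀ (by positivity) hh two_ne_zero]
  constructor
  · intro H
    have := H _ hM
    rw [sq_norm_midpoint_sub hA hB] at this
    linarith
  · intro H w hw
    have := sq_norm_midpoint_sub_le hA hB hC hobt hw
    rw [sq_norm_midpoint_sub hA hB] at this
    linarith

theorem forall_le_sq_norm_sub_add_sq_iff_max_le (hA : ‖c - A‖ = r) (hB : ‖c - B‖ = r)
    (hC : ‖c - C‖ = r)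
    (hobt : ⟪B - A, C - A⟫ ≤ 0 ∨ ⟪A - B, C - B⟫ ≤ 0 ∨ ⟪A - C, B - C⟫ ≤ 0) (hh : 0 ≤ h) :
    (∀ w ∈ convexHull ℝ {A, B, C}, r ^ 2 ≤ ‖w - c‖ ^ 2 + h ^ 2) ↔
      max (‖A - B‖ / 2) (max (‖C - A‖ / 2) (‖C - B‖ / 2)) ≤ h := by
  rcases hobt with hobt | hobt | hobt
  · have hAB : ‖A - B‖ ≤ ‖C - B‖ := by
      rw [norm_sub_rev A, norm_sub_rev C]; exact norm_sub_le_norm_sub_of_real_inner_nonpos hobt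
    have hCA : ‖C - A‖ ≤ ‖C - B‖ :=
      norm_sub_le_norm_sub_of_real_inner_nonpos (by rwa [real_inner_comm])
    rw [Set.insert_comm, Set.pair_comm,
      forall_le_sq_norm_sub_add_sq_iff_of_real_inner_nonpos hB hC hA hobt hh, norm_sub_rev,
      max_eq_right (le_max_of_le_right (by linarith)), max_eq_right (by linarith)]
  · have hAB : ‖A - B‖ ≤ ‖C - A‖ := by
      rw [norm_sub_rev C]; exact norm_sub_le_norm_sub_of_real_inner_nonpos hobt
    have hCB : ‖C - B‖ ≤ ‖C - A‖ :=
      norm_sub_le_norm_sub_of_real_inner_nonpos (by rwa [real_inner_comm])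
    rw [Set.pair_comm, forall_le_sq_norm_sub_add_sq_iff_of_real_inner_nonpos hA hC hB hobt hh,
      norm_sub_rev, max_eq_right (le_max_of_le_left (by linarith)), max_eq_left (by linarith)]
  · have hCA : ‖C - A‖ ≤ ‖A - B‖ := by
      rw [norm_sub_rev]; exact norm_sub_le_norm_sub_of_real_inner_nonpos hobt
    have hCB : ‖C - B‖ ≤ ‖A - B‖ := by
      rw [norm_sub_rev, norm_sub_rev A]
      exact norm_sub_le_norm_sub_of_real_inner_nonpos (by rwa [real_inner_comm])
    rw [forall_le_sq_norm_sub_add_sq_iff_of_real_inner_nonpos hA hB hC hobt hh,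
      max_eq_left (max_le (by linarith) (by linarith))]

end Equidistant

theorem smul_add_smul_mem_convexHull_zero {E : Type*} [AddCommGroup E] [Module ℝ E] {b d : ℝ}
    (hb : 0 ≤ b) (hd : 0 ≤ d) (hbd : b + d ≤ 1) (x y : E) :
    b • x + d • y ∈ convexHull ℝ {0, x, y} := by
  have := (convex_convexHull ℝ ({0, x, y} : Set E)).sum_mem (t := Finset.univ)
    (w := ![1 - b - d, b, d]) (z := ![0, x, y]) ?_ ?_ ?_
  · simpa [Fin.sum_univ_three] using this
  · intro i _; fin_cases i <;> simp <;> linarith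
  · simp [Fin.sum_univ_three]; ring
  · intro i _; fin_cases i <;> exact subset_convexHull ℝ _ (by simp)

theorem mem_convexHull_zero_one_of_real_inner_nonneg {z c : ℂ} (hz : z.im ≠ 0)
    (hc1 : ‖c - 1‖ = ‖c‖) (hcz : ‖c - z‖ = ‖c‖)
    (h₀ : 0 ≤ ⟪1, z⟫) (h₁ : 0 ≤ ⟪-1, z - 1⟫) (h₂ : 0 ≤ ⟪-z, 1 - z⟫) :
    c ∈ convexHull ℝ {0, 1, z} := by
  simp only [Complex.inner, map_one, mul_one, map_neg, mul_neg, neg_re, sub_re, one_re,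
    sub_mul, one_mul, mul_conj, normSq_apply, ofReal_re, conj_re] at h₀ h₁ h₂
  rw [← sq_eq_sq₀ (norm_nonneg _) (norm_nonneg _), Complex.sq_norm, Complex.sq_norm,
    normSq_apply, normSq_apply] at hc1 hcz
  simp only [sub_re, sub_im, one_re, one_im, sub_zero] at hc1 hcz
  obtain ⟨x, y⟩ := z
  obtain ⟨p, q⟩ := c
  simp only at *
  have hp : p = 1 / 2 := by linarith
  have hq : 2 * q * y = x ^ 2 + y ^ 2 - x := by subst hp; linarith
  have hy2 : 0 < y ^ 2 := by positivity
  have hbary : (⟨p, q⟩ : ℂ) = ((1 - x) * (x ^ 2 + y ^ 2) / (2 * y ^ 2)) • (1 : ℂ)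
      + ((x ^ 2 + y ^ 2 - x) / (2 * y ^ 2)) • (⟨x, y⟩ : ℂ) := by
    apply Complex.ext <;>
      simp only [add_re, add_im, smul_re, smul_im, one_re, one_im, smul_eq_mul] <;>
      field_simp
    · linear_combination (2 * y ^ 2) * hp
    · linear_combination y * hq
  rw [hbary]
  refine smul_add_smul_mem_convexHull_zero
    (div_nonneg (mul_nonneg (by linarith) (by positivity)) (by positivity))
    (div_nonneg (by linarith) (by positivity)) ?_ 1 _
  rw [← add_div, div_le_one (by positivity)]
  nlinarith [mul_nonneg h₀ (add_nonneg (sq_nonneg (x - 1)) (sq_nonneg y))]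

theorem triangle_cross_section_threshold_general (z : ℂ) (hz : z.im ≠ 0)
    (T : Set ℂ) (hT : T = convexHull ℝ ({0, 1, z} : Set ℂ))
    (c : ℂ) (r : ℝ)
    (hc0 : ‖c‖ = r) (hc1 : ‖c - 1‖ = r)
    (hcz : ‖c - z‖ = r)
    (k : ℝ)
    (hkin : c ∈ T → k = r)
    (hkout : c ∉ T → k = max (1 / 2) (max (‖z‖ / 2) (‖z - 1‖ / 2))) :
    ∀ h : ℝ, 0 ≤ h →
      ((∀ w ∈ T, r ^ 2 ≤ ‖w - c‖ ^ 2 + h ^ 2) ↔ k ≤ h) := by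
  intro h hh
  subst hT
  by_cases hcT : c ∈ convexHull ℝ {0, 1, z}
  · rw [hkin hcT]
    exact forall_le_sq_norm_sub_add_sq_iff_of_mem hcT (hc0 ▸ norm_nonneg c) hh
  · rw [hkout hcT]
    have hobt : ⟪1 - 0, z - 0⟫ ≤ 0 ∨ ⟪0 - 1, z - 1⟫ ≤ 0 ∨ ⟪0 - z, 1 - z⟫ ≤ 0 := by
      contrapose! hcT
      simp only [sub_zero, zero_sub] at hcT
      exact mem_convexHull_zero_one_of_real_inner_nonneg hz (hc1.trans hc0.symm)
        (hcz.trans hc0.symm) hcT.1.le hcT.2.1.le hcT.2.2.le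
    simpa using
      forall_le_sq_norm_sub_add_sq_iff_max_le (c := c) (r := r) (by simpa) hc1 hcz hobt hh

/-- Let T be the closed triangle in ℂ with vertices 0, 1, z (z not real), let c and
r > 0 be its circumcenter and circumradius, and let k = r if c ∈ T and
k = max(1/2, |z|/2, |z−1|/2) otherwise.  Then for every h ≥ 0, the horizontal plane at
height h meets the ideal tetrahedron with vertices ∞, 0, 1, z in the full triangular
cross-section (i.e. r² ≤ |w − c|² + h² for all w ∈ T) if and only if k ≤ h. -/
theorem triangle_cross_section_threshold (z : ℂ) (hz : z.im ≠ 0)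
    (T : Set ℂ) (hT : T = convexHull ℝ ({0, 1, z} : Set ℂ))
    (c : ℂ) (r : ℝ) (hr : 0 < r)
    (hc0 : ‖c‖ = r) (hc1 : ‖c - 1‖ = r)
    (hcz : ‖c - z‖ = r)
    (k : ℝ)
    (hkin : c ∈ T → k = r)
    (hkout : c ∉ T → k = max (1 / 2) (max (‖z‖ / 2) (‖z - 1‖ / 2))) :
    ∀ h : ℝ, 0 ≤ h →
      ((∀ w ∈ T, r ^ 2 ≤ ‖w - c‖ ^ 2 + h ^ 2) ↔ k ≤ h) :=
  triangle_cross_section_threshold_general z hz T hT c r hc0 hc1 hcz k hkin hkout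
end

section
/- Each of the following fourteen pairs in Φ² is equivalent, under the smallest equivalence relation on Φ² relating every pair to its image under each of the maps W₀, W₁, W₂ wherever defined, either to (−2,−2), or to (5/2,7/2), or to a pair having at least one entry in {1, 2, 3, 4}: (−4,−1), (−3,−1), (−2,−2), (−2,−1), (−1,−4), (−1,−3), (−1,−2), (−1,−1), (3/2,5), (4/3,5), (5,3/2), (5,4/3), (5/2,7/2), (7/2,5/2). -/
lemma swapStep (a b : Phi) : Relation.EqvGen stepW ![a, b] ![b, a] := by
  refine Relation.EqvGen.rel _ _ (Or.inl ?_)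
  funext i; fin_cases i <;> rfl

lemma w1Step (a b : Phi) (h : mobP (-1) 0 0 1 a = b) :
    Relation.EqvGen stepW ![sl (-1), a] ![sl (-1), b] := by
  refine Relation.EqvGen.rel _ _ (Or.inr (Or.inl ⟨rfl, ?_⟩))
  funext i; fin_cases i
  · rfl
  · simp [← h]

lemma w2Step (a b : Phi) (h : mobP 1 0 1 (-1) a = b) :
    Relation.EqvGen stepW ![sl 5, a] ![sl 5, b] := by
  refine Relation.EqvGen.rel _ _ (Or.inr (Or.inr ⟨rfl, ?_⟩))
  funext i; fin_cases i
  · rfl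
  · simp [← h]

lemma mob1 (x y : ℚ) (h : -x = y) : mobP (-1) 0 0 1 (sl x) = sl y := by
  simp [mobP, mob, sl, ← h]

lemma mob2 (x y : ℚ) (hx : x - 1 ≠ 0) (h : x / (x - 1) = y) :
    mobP 1 0 1 (-1) (sl x) = sl y := by
  simp only [mobP, sl, Option.map_some, mob]
  rw [if_neg (by rw [one_mul]; intro h'; apply hx; linarith)]
  · norm_num [← h]; ring_nf

/-- Each of the fourteen listed pairs in Φ² is equivalent, under the smallest equivalence
relation relating every pair to its image under W₀, W₁, W₂ wherever defined, either to
(−2,−2), or to (5/2,7/2), or to a pair having at least one entry in {1, 2, 3, 4}. -/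
theorem whitehead_fourteen_fillings_reduce :
    ∀ t ∈ ([![sl (-4), sl (-1)], ![sl (-3), sl (-1)], ![sl (-2), sl (-2)],
        ![sl (-2), sl (-1)], ![sl (-1), sl (-4)], ![sl (-1), sl (-3)],
        ![sl (-1), sl (-2)], ![sl (-1), sl (-1)], ![sl (3/2), sl 5],
        ![sl (4/3), sl 5], ![sl 5, sl (3/2)], ![sl 5, sl (4/3)],
        ![sl (5/2), sl (7/2)], ![sl (7/2), sl (5/2)]] : List Phi2),
      Relation.EqvGen stepW t ![sl (-2), sl (-2)] ∨
      Relation.EqvGen stepW t ![sl (5/2), sl (7/2)] ∨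
      ∃ u : Phi2, Relation.EqvGen stepW t u ∧
        (u 0 ∈ ({sl 1, sl 2, sl 3, sl 4} : Set Phi) ∨
         u 1 ∈ ({sl 1, sl 2, sl 3, sl 4} : Set Phi)) := by
  intro t ht
  simp only [List.mem_cons, List.not_mem_nil, or_false] at ht
  rcases ht with h|h|h|h|h|h|h|h|h|h|h|h|h|h <;> subst h
  · right; right
    exact ⟨![sl (-1), sl 4],
      Relation.EqvGen.trans _ _ _ (swapStep _ _)
        (w1Step _ _ (mob1 (-4) 4 (by norm_num))),
      Or.inr (by simp)⟩
  · right; right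
    exact ⟨![sl (-1), sl 3],
      Relation.EqvGen.trans _ _ _ (swapStep _ _)
        (w1Step _ _ (mob1 (-3) 3 (by norm_num))),
      Or.inr (by simp)⟩
  · left; exact Relation.EqvGen.refl _
  · right; right
    exact ⟨![sl (-1), sl 2],
      Relation.EqvGen.trans _ _ _ (swapStep _ _)
        (w1Step _ _ (mob1 (-2) 2 (by norm_num))),
      Or.inr (by simp)⟩
  · right; right
    exact ⟨![sl (-1), sl 4], w1Step _ _ (mob1 (-4) 4 (by norm_num)), Or.inr (by simp)⟩
  · right; right
    exact ⟨![sl (-1), sl 3], w1Step _ _ (mob1 (-3) 3 (by norm_num)), Or.inr (by simp)⟩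
  · right; right
    exact ⟨![sl (-1), sl 2], w1Step _ _ (mob1 (-2) 2 (by norm_num)), Or.inr (by simp)⟩
  · right; right
    exact ⟨![sl (-1), sl 1], w1Step _ _ (mob1 (-1) 1 (by norm_num)), Or.inr (by simp)⟩
  · right; right
    exact ⟨![sl 5, sl 3],
      Relation.EqvGen.trans _ _ _ (swapStep _ _)
        (w2Step _ _ (mob2 (3/2) 3 (by norm_num) (by norm_num))),
      Or.inr (by simp)⟩
  · right; right
    exact ⟨![sl 5, sl 4],
      Relation.EqvGen.trans _ _ _ (swapStep _ _)
        (w2Step _ _ (mob2 (4/3) 4 (by norm_num) (by norm_num))),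
      Or.inr (by simp)⟩
  · right; right
    exact ⟨![sl 5, sl 3], w2Step _ _ (mob2 (3/2) 3 (by norm_num) (by norm_num)),
      Or.inr (by simp)⟩
  · right; right
    exact ⟨![sl 5, sl 4], w2Step _ _ (mob2 (4/3) 4 (by norm_num) (by norm_num)),
      Or.inr (by simp)⟩
  · right; left; exact Relation.EqvGen.refl _
  · right; left; exact swapStep _ _
end

section
/- The partial map β cannot be deduced from σ, τ, ν: there exists a 5-tuple α ∈ Φ⁵ with first entry −1 such that β(α) does not lie in the orbit of α under the group of permutations of Φ⁵ generated by σ, τ, ν. -/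
/-- β(−1,α₂,α₃,α₄,α₅) = (−1, α₃−1, α₄, α₅+1, α₂), the value of the partial map β on a
5-tuple with first entry −1. -/
def betaMap (x : Phi5) : Phi5 :=
  ![sl (-1), mobP 1 (-1) 0 1 (x 2), x 3, mobP 1 1 0 1 (x 4), x 1]

/-! The entrywise invariant is the anharmonic orbit `{−1, 2, 1/2}` of `−1`: the Möbius maps
`1/x`, `1 − x`, `x/(x − 1)` used by `ν` permute it, and `σ`, `τ` only permute coordinates, so the
group generated by `σ, τ, ν` preserves the set of tuples with all entries in this orbit. The
tuple `(−1, −1, −1, −1, −1)` lies in it, but its image under `β` has second entry `−1 − 1 = −2`. -/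

open Function Set MulAction
open scoped Pointwise

/-- The matrix `[[a, b], [c, -a]]` squares to `(a² + bc) • 1`. -/
lemma mob_involutive (a b c : ℚ) (h : a * a + b * c ≠ 0) : Involutive (mob a b c (-a)) := by
  rintro (_ | x)
  · by_cases hc : c = 0
    · simp [mob, hc]
    · simp [mob, hc, mul_div_cancel₀]
  · by_cases hx : c * x + -a = 0
    · have hc : c ≠ 0 := by
        rintro rfl
        exact h (by simp_all)
      have hxa : x = a / c := by field_simp; linarith
      simp [mob, hc, hxa, mul_div_cancel₀]
    · have hy : c * ((a * x + b) / (c * x + -a)) + -a = (a * a + b * c) / (c * x + -a) := by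
        field_simp; ring
      have hxy : (a * ((a * x + b) / (c * x + -a)) + b) * (c * x + -a) / (a * a + b * c) = x := by
        rw [div_eq_iff h, add_mul, mul_assoc, div_mul_cancel₀ _ hx]; ring
      simp only [mob, hy, div_eq_zero_iff, h, hx, or_self, if_false, div_div_eq_mul_div, hxy]

lemma Function.Involutive.option_map {α : Type*} {f : α → α} (hf : Involutive f) :
    Involutive (Option.map f) := fun x => by
  rw [Option.map_map, hf.comp_self, Option.map_id, id]

lemma mobP_involutive (a b c : ℚ) (h : a * a + b * c ≠ 0) : Involutive (mobP a b c (-a)) :=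
  (mob_involutive a b c h).option_map

lemma nuMap_involutive : Involutive nuMap := by
  have hinv := mobP_involutive 0 1 1 (by norm_num)
  have hsub := mobP_involutive (-1) 1 0 (by norm_num)
  have hdiv := mobP_involutive 1 0 1 (by norm_num)
  rw [neg_zero] at hinv
  rw [neg_neg] at hsub
  intro x
  funext i
  fin_cases i <;> simp [nuMap, hinv _, hsub _, hdiv _]

def anharmonicOrbit : Set Phi := {sl (-1), sl 2, sl (1 / 2)}

lemma mapsTo_anharmonicOrbit :
    MapsTo (mobP 0 1 1 0) anharmonicOrbit anharmonicOrbit ∧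
      MapsTo (mobP (-1) 1 0 1) anharmonicOrbit anharmonicOrbit ∧
      MapsTo (mobP 1 0 1 (-1)) anharmonicOrbit anharmonicOrbit := by
  refine ⟨?_, ?_, ?_⟩ <;> rintro v (rfl | rfl | rfl) <;> norm_num [anharmonicOrbit, mobP, mob, sl]

def anharmonicTuples : Set Phi5 := univ.pi fun _ => anharmonicOrbit

lemma sigmaMap_mem_anharmonicTuples_iff (x : Phi5) :
    sigmaMap x ∈ anharmonicTuples ↔ x ∈ anharmonicTuples := by
  simp only [anharmonicTuples, mem_univ_pi, Fin.forall_fin_succ, sigmaMap, Matrix.cons_val_zero,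
    Fin.succ_zero_eq_one, Fin.succ_one_eq_two, Fin.reduceSucc, Matrix.cons_val_succ, Matrix.cons_val_fin_one, IsEmpty.forall_iff, and_true]
  tauto

lemma tauMap_mem_anharmonicTuples_iff (x : Phi5) :
    tauMap x ∈ anharmonicTuples ↔ x ∈ anharmonicTuples := by
  simp only [anharmonicTuples, mem_univ_pi, Fin.forall_fin_succ, tauMap, Matrix.cons_val_zero,
    Fin.succ_zero_eq_one, Fin.succ_one_eq_two, Fin.reduceSucc, Matrix.cons_val_succ, Matrix.cons_val_fin_one, IsEmpty.forall_iff, and_true]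
  tauto

lemma mapsTo_nuMap_anharmonicTuples : MapsTo nuMap anharmonicTuples anharmonicTuples := by
  obtain ⟨hinv, hsub, hdiv⟩ := mapsTo_anharmonicOrbit
  intro x hx
  simp only [anharmonicTuples, mem_univ_pi] at hx ⊢
  intro i
  fin_cases i
  exacts [hinv (hx 1), hinv (hx 0), hsub (hx 2), hdiv (hx 3), hsub (hx 4)]

lemma nuMap_mem_anharmonicTuples_iff (x : Phi5) :
    nuMap x ∈ anharmonicTuples ↔ x ∈ anharmonicTuples :=
  ⟨fun h => nuMap_involutive x ▸ mapsTo_nuMap_anharmonicTuples h,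
    fun h => mapsTo_nuMap_anharmonicTuples h⟩

lemma betaMap_const_not_mem_anharmonicTuples :
    betaMap (fun _ => sl (-1)) ∉ anharmonicTuples := by
  intro h
  have h1 := h 1 (mem_univ _)
  norm_num [betaMap, anharmonicOrbit, mobP, mob, sl] at h1

/-- The partial map β cannot be deduced from σ, τ, ν: there is a 5-tuple α with first
entry −1 such that β(α) does not lie in the orbit of α under the group of permutations
of Φ⁵ generated by σ, τ, ν. -/
theorem beta_not_generated_by_sigma_tau_nu :
    ∀ σE τE νE : Equiv.Perm Phi5,
      ⇑σE = sigmaMap → ⇑τE = tauMap → ⇑νE = nuMap →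
      ∃ α : Phi5, α 0 = sl (-1) ∧
        ¬ ∃ k ∈ Subgroup.closure ({σE, τE, νE} : Set (Equiv.Perm Phi5)),
            k α = betaMap α := by
  intro σE τE νE hσ hτ hν
  refine ⟨fun _ => sl (-1), rfl, ?_⟩
  rintro ⟨k, hk, hkα⟩
  have hgen : Subgroup.closure {σE, τE, νE} ≤ stabilizer (Equiv.Perm Phi5) anharmonicTuples := by
    refine (Subgroup.closure_le _).2 ?_
    rintro g (rfl | rfl | rfl) <;> refine mem_stabilizer_set.2 fun x => ?_ <;>
      rw [Equiv.Perm.smul_def]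
    exacts [hσ ▸ sigmaMap_mem_anharmonicTuples_iff x, hτ ▸ tauMap_mem_anharmonicTuples_iff x,
      hν ▸ nuMap_mem_anharmonicTuples_iff x]
  have hconst : (fun _ => sl (-1)) ∈ anharmonicTuples := fun _ _ => Or.inl rfl
  have hkconst := (mem_stabilizer_set.1 (hgen hk) _).2 hconst
  rw [Equiv.Perm.smul_def, hkα] at hkconst
  exact betaMap_const_not_mem_anharmonicTuples hkconst
end
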